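/- Let 0 < λ1 < λ2. For each integer k ≥ 1, let X_k and Y_k be independent real random variables, where X_k has the Gamma distribution with shape k and rate λ1 and Y_k has the Gamma distribution with shape k and rate λ2. Then lim_{k→∞} ( E[|X_k − Y_k|] − k·(1/λ1 − 1/λ2) ) = 0. -/

import Mathlib

/-!
With `D = X - Y`, the quantity `E|D| - E D` is twice the mean of the negative part of `D`, and
`|d| - d ≤ (2/θ) e^{-θ d}` for `θ > 0`. By independence,
`E e^{-θ D} = (λ₁/(λ₁+θ))^k (λ₂/(λ₂-θ))^k`, and for `θ = (λ₂ - λ₁)/2` the ratio is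
`λ₁λ₂ / (λ₁λ₂ + θ²) < 1`, so the error decays geometrically in `k`.
-/

open MeasureTheory ProbabilityTheory Filter Real Set

lemma integrableOn_rpow_mul_exp_neg_mul_Ioi {a b : ℝ} (ha : 0 < a) (hb : 0 < b) :
    IntegrableOn (fun x : ℝ => x ^ (a - 1) * exp (-(b * x))) (Ioi 0) := by
  simpa [rpow_one, neg_mul] using
    integrableOn_rpow_mul_exp_neg_mul_rpow (s := a - 1) (p := 1) (by linarith) one_pos hb

lemma abs_sub_self_le_two_div_mul_exp {θ : ℝ} (hθ : 0 < θ) (d : ℝ) :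
    |d| - d ≤ 2 / θ * exp (-θ * d) := by
  rcases le_or_gt 0 d with hd | hd
  · rw [abs_of_nonneg hd, sub_self]
    positivity
  · rw [abs_of_neg hd, div_mul_eq_mul_div, le_div_iff₀ hθ]
    nlinarith [add_one_le_exp (-θ * d)]

namespace ProbabilityTheory

section Gamma

variable {a r : ℝ}

lemma gammaPDF_toReal (ha : 0 < a) (hr : 0 < r) (x : ℝ) :
    (gammaPDF a r x).toReal = gammaPDFReal a r x :=
  ENNReal.toReal_ofReal (gammaPDFReal_nonneg ha hr x)

lemma gammaPDFReal_of_neg {x : ℝ} (hx : x < 0) : gammaPDFReal a r x = 0 := by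
  simp [gammaPDFReal, hx.not_ge]

lemma measurable_gammaPDF (a r : ℝ) : Measurable (gammaPDF a r) :=
  (measurable_gammaPDFReal a r).ennreal_ofReal

lemma integral_gammaMeasure (ha : 0 < a) (hr : 0 < r) (g : ℝ → ℝ) :
    ∫ x, g x ∂gammaMeasure a r = ∫ x in Ioi 0, gammaPDFReal a r x * g x := by
  rw [gammaMeasure, integral_withDensity_eq_integral_toReal_smul
      (measurable_gammaPDF a r) (ae_of_all _ fun _ => ENNReal.ofReal_lt_top),
    ← integral_Ici_eq_integral_Ioi, setIntegral_eq_integral_of_forall_compl_eq_zero]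
  · simp only [gammaPDF_toReal ha hr, smul_eq_mul]
  · intro x hx
    rw [gammaPDFReal_of_neg (not_le.mp hx), zero_mul]

lemma integrable_gammaMeasure_iff (ha : 0 < a) (hr : 0 < r) {g : ℝ → ℝ} :
    Integrable g (gammaMeasure a r) ↔
      IntegrableOn (fun x => gammaPDFReal a r x * g x) (Ioi 0) := by
  rw [gammaMeasure, integrable_withDensity_iff_integrable_smul'
      (measurable_gammaPDF a r) (ae_of_all _ fun _ => ENNReal.ofReal_lt_top),
    ← integrableOn_Ici_iff_integrableOn_Ioi, integrableOn_iff_integrable_of_support_subset]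
  · simp only [gammaPDF_toReal ha hr, smul_eq_mul]
  · intro x hx
    by_contra hx'
    exact hx (by simp [gammaPDFReal_of_neg (not_le.mp hx')])

lemma gammaPDFReal_mul_rpow_mul_exp {c t x : ℝ} (hx : 0 < x) :
    gammaPDFReal a r x * (x ^ c * exp (t * x)) =
      r ^ a / Gamma a * (x ^ (a + c - 1) * exp (-((r - t) * x))) := by
  rw [gammaPDFReal, if_pos hx.le, show a + c - 1 = (a - 1) + c by ring, rpow_add hx,
    show -((r - t) * x) = -(r * x) + t * x by ring, exp_add]
  ring

lemma integrable_rpow_mul_exp_gammaMeasure (ha : 0 < a) (hr : 0 < r) {c t : ℝ}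
    (hac : 0 < a + c) (ht : t < r) :
    Integrable (fun x => x ^ c * exp (t * x)) (gammaMeasure a r) := by
  rw [integrable_gammaMeasure_iff ha hr]
  exact IntegrableOn.congr_fun
    ((integrableOn_rpow_mul_exp_neg_mul_Ioi hac (sub_pos.mpr ht)).const_mul _)
    (fun x hx => (gammaPDFReal_mul_rpow_mul_exp hx).symm) measurableSet_Ioi

lemma integral_rpow_mul_exp_gammaMeasure (ha : 0 < a) (hr : 0 < r) {c t : ℝ}
    (hac : 0 < a + c) (ht : t < r) :
    ∫ x, x ^ c * exp (t * x) ∂gammaMeasure a r =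
      r ^ a / Gamma a * ((1 / (r - t)) ^ (a + c) * Gamma (a + c)) := by
  rw [integral_gammaMeasure ha hr,
    setIntegral_congr_fun measurableSet_Ioi fun x hx => gammaPDFReal_mul_rpow_mul_exp hx,
    integral_const_mul, integral_rpow_mul_exp_neg_mul_Ioi hac (sub_pos.mpr ht)]

lemma integrable_id_gammaMeasure (ha : 0 < a) (hr : 0 < r) :
    Integrable (fun x => x) (gammaMeasure a r) := by
  simpa using integrable_rpow_mul_exp_gammaMeasure ha hr (c := 1) (t := 0) (by linarith) hr

lemma integral_id_gammaMeasure (ha : 0 < a) (hr : 0 < r) :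
    ∫ x, x ∂gammaMeasure a r = a / r := by
  have h := integral_rpow_mul_exp_gammaMeasure ha hr (c := 1) (t := 0) (by linarith) hr
  simp only [rpow_one, zero_mul, exp_zero, mul_one, sub_zero] at h
  rw [h, Gamma_add_one ha.ne', rpow_add_one (by positivity), div_rpow zero_le_one hr.le,
    one_rpow]
  field_simp [(Gamma_pos_of_pos ha).ne', (rpow_pos_of_pos hr a).ne']

lemma integrable_exp_mul_gammaMeasure (ha : 0 < a) (hr : 0 < r) {t : ℝ} (ht : t < r) :
    Integrable (fun x => exp (t * x)) (gammaMeasure a r) := by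
  simpa using integrable_rpow_mul_exp_gammaMeasure ha hr (c := 0) (by linarith) ht

lemma mgf_id_gammaMeasure (ha : 0 < a) (hr : 0 < r) {t : ℝ} (ht : t < r) :
    mgf id (gammaMeasure a r) t = (r / (r - t)) ^ a := by
  have h := integral_rpow_mul_exp_gammaMeasure ha hr (c := 0) (by linarith) ht
  simp only [rpow_zero, one_mul, add_zero] at h
  simp only [mgf, id]
  rw [h, div_rpow hr.le (sub_pos.mpr ht).le, div_rpow zero_le_one (sub_pos.mpr ht).le,
    one_rpow]
  field_simp [(Gamma_pos_of_pos ha).ne']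

end Gamma

variable {Ω : Type*} [MeasurableSpace Ω] {μ : Measure Ω}

lemma integral_abs_sub_integral_le_mgf {D : Ω → ℝ} {θ : ℝ} (hθ : 0 < θ) (hD : Integrable D μ)
    (hexp : Integrable (fun ω => exp (-θ * D ω)) μ) :
    ∫ ω, |D ω| ∂μ - ∫ ω, D ω ∂μ ≤ 2 / θ * mgf D μ (-θ) := by
  rw [← integral_sub hD.abs hD, mgf, ← integral_const_mul]
  exact integral_mono (hD.abs.sub hD) (hexp.const_mul _)
    fun ω => abs_sub_self_le_two_div_mul_exp hθ (D ω)

lemma IndepFun.mgf_sub {X Y : Ω → ℝ} (h : IndepFun X Y μ) (hX : AEMeasurable X μ)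
    (hY : AEMeasurable Y μ) (t : ℝ) :
    mgf (X - Y) μ t = mgf X μ t * mgf Y μ (-t) := by
  have h' : IndepFun X (-Y) μ := h.comp measurable_id measurable_neg
  rw [sub_eq_add_neg, h'.mgf_add' hX.aestronglyMeasurable hY.neg.aestronglyMeasurable, mgf_neg]

lemma IndepFun.integrable_exp_mul_sub {X Y : Ω → ℝ} {t : ℝ} (h : IndepFun X Y μ)
    (hX : Integrable (fun ω => exp (t * X ω)) μ) (hY : Integrable (fun ω => exp (-t * Y ω)) μ) :
    Integrable (fun ω => exp (t * (X - Y) ω)) μ := by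
  have h' : IndepFun X (-Y) μ := h.comp measurable_id measurable_neg
  rw [sub_eq_add_neg]
  exact h'.integrable_exp_mul_add hX
    (by simpa only [Pi.neg_apply, mul_neg, neg_mul] using hY)

lemma identDistrib_id_of_map_eq_gammaMeasure {X : Ω → ℝ} {a r : ℝ} (ha : 0 < a) (hr : 0 < r)
    (h : μ.map X = gammaMeasure a r) : IdentDistrib X id μ (gammaMeasure a r) := by
  have := isProbabilityMeasure_gammaMeasure ha hr
  exact ⟨.of_map_ne_zero (h ▸ IsProbabilityMeasure.ne_zero _), aemeasurable_id,
    by rw [h, Measure.map_id]⟩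

theorem integral_abs_sub_sub_mem_Icc_of_gamma {X Y : Ω → ℝ} {a r₁ r₂ θ : ℝ} (ha : 0 < a)
    (hr₁ : 0 < r₁) (hθ : 0 < θ) (hθr₂ : θ < r₂) (hXY : IndepFun X Y μ)
    (hX : μ.map X = gammaMeasure a r₁) (hY : μ.map Y = gammaMeasure a r₂) :
    ∫ ω, |X ω - Y ω| ∂μ - a * (1 / r₁ - 1 / r₂) ∈
      Icc 0 (2 / θ * (r₁ / (r₁ + θ) * (r₂ / (r₂ - θ))) ^ a) := by
  have hr₂ : 0 < r₂ := hθ.trans hθr₂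
  have iX := identDistrib_id_of_map_eq_gammaMeasure ha hr₁ hX
  have iY := identDistrib_id_of_map_eq_gammaMeasure ha hr₂ hY
  have hXi : Integrable X μ := iX.integrable_iff.mpr (integrable_id_gammaMeasure ha hr₁)
  have hYi : Integrable Y μ := iY.integrable_iff.mpr (integrable_id_gammaMeasure ha hr₂)
  have hmean : ∫ ω, X ω - Y ω ∂μ = a * (1 / r₁ - 1 / r₂) := by
    simp only [integral_sub hXi hYi, iX.integral_eq, iY.integral_eq, id,
      integral_id_gammaMeasure ha hr₁, integral_id_gammaMeasure ha hr₂]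
    ring
  have hexpX : Integrable (fun ω => exp (-θ * X ω)) μ :=
    (iX.comp (measurable_const_mul _).exp).integrable_iff.mpr
      (integrable_exp_mul_gammaMeasure ha hr₁ (by linarith))
  have hexpY : Integrable (fun ω => exp (- -θ * Y ω)) μ :=
    (iY.comp (measurable_const_mul _).exp).integrable_iff.mpr
      (integrable_exp_mul_gammaMeasure ha hr₂ (by linarith))
  have hmgf : mgf (X - Y) μ (-θ) = (r₁ / (r₁ + θ) * (r₂ / (r₂ - θ))) ^ a := by
    rw [hXY.mgf_sub iX.aemeasurable_fst iY.aemeasurable_fst, mgf_congr_identDistrib iX,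
      mgf_congr_identDistrib iY, mgf_id_gammaMeasure ha hr₁ (by linarith),
      mgf_id_gammaMeasure ha hr₂ (by linarith), neg_neg, sub_neg_eq_add,
      mul_rpow (by positivity) (div_pos hr₂ (sub_pos.mpr hθr₂)).le]
  constructor
  · rw [← hmean, sub_nonneg]
    exact (le_abs_self _).trans abs_integral_le_integral_abs
  · rw [← hmean, ← hmgf]
    exact integral_abs_sub_integral_le_mgf hθ (hXi.sub hYi)
      (hXY.integrable_exp_mul_sub hexpX hexpY)

end ProbabilityTheory

theorem tendsto_expected_abs_diff_sub_linear_general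
    {Ω : Type*} [MeasurableSpace Ω] (μ : Measure Ω)
    (lam1 lam2 : ℝ) (hlam1 : 0 < lam1) (hlam12 : lam1 < lam2)
    (X Y : ℕ → Ω → ℝ)
    (hindep : ∀ k, 1 ≤ k → IndepFun (X k) (Y k) μ)
    (hXlaw : ∀ k, 1 ≤ k → μ.map (X k) = gammaMeasure k lam1)
    (hYlaw : ∀ k, 1 ≤ k → μ.map (Y k) = gammaMeasure k lam2) :
    Tendsto (fun k : ℕ =>
        (∫ ω, |X k ω - Y k ω| ∂μ) - (k : ℝ) * (1 / lam1 - 1 / lam2))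
      atTop (nhds 0) := by
  set θ := (lam2 - lam1) / 2 with hθ_def
  have hθ : 0 < θ := half_pos (sub_pos.mpr hlam12)
  have hθlam2 : 0 < lam2 - θ := by linarith
  set ρ := lam1 / (lam1 + θ) * (lam2 / (lam2 - θ)) with hρ_def
  have hρ0 : 0 ≤ ρ := (mul_pos (div_pos hlam1 (by linarith)) (div_pos (by linarith) hθlam2)).le
  have hρ1 : ρ < 1 := by
    rw [hρ_def, div_mul_div_comm, div_lt_one (mul_pos (by linarith) hθlam2)]
    nlinarith [mul_pos hθ hθ]
  have hbound : ∀ k, 1 ≤ k → (∫ ω, |X k ω - Y k ω| ∂μ) - (k : ℝ) * (1 / lam1 - 1 / lam2) ∈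
      Icc 0 (2 / θ * ρ ^ k) := fun k hk => by
    simpa only [rpow_natCast] using integral_abs_sub_sub_mem_Icc_of_gamma (Nat.cast_pos.mpr hk)
      hlam1 hθ (sub_pos.mp hθlam2) (hindep k hk) (hXlaw k hk) (hYlaw k hk)
  have hlim : Tendsto (fun k : ℕ => 2 / θ * ρ ^ k) atTop (nhds 0) := by
    simpa using (tendsto_pow_atTop_nhds_zero_of_lt_one hρ0 hρ1).const_mul (2 / θ)
  exact tendsto_of_tendsto_of_tendsto_of_le_of_le' tendsto_const_nhds hlim
    (eventually_atTop.mpr ⟨1, fun k hk => (hbound k hk).1⟩)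
    (eventually_atTop.mpr ⟨1, fun k hk => (hbound k hk).2⟩)

theorem tendsto_expected_abs_diff_sub_linear
    {Ω : Type*} [MeasurableSpace Ω] (μ : Measure Ω) [IsProbabilityMeasure μ]
    (lam1 lam2 : ℝ) (hlam1 : 0 < lam1) (hlam12 : lam1 < lam2)
    (X Y : ℕ → Ω → ℝ)
    (hX : ∀ k, 1 ≤ k → Measurable (X k)) (hY : ∀ k, 1 ≤ k → Measurable (Y k))
    (hindep : ∀ k, 1 ≤ k → IndepFun (X k) (Y k) μ)
    (hXlaw : ∀ k, 1 ≤ k → μ.map (X k) = gammaMeasure k lam1)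
    (hYlaw : ∀ k, 1 ≤ k → μ.map (Y k) = gammaMeasure k lam2) :
    Tendsto (fun k : ℕ =>
        (∫ ω, |X k ω - Y k ω| ∂μ) - (k : ℝ) * (1 / lam1 - 1 / lam2))
      atTop (nhds 0) :=
  tendsto_expected_abs_diff_sub_linear_general μ lam1 lam2 hlam1 hlam12 X Y hindep hXlaw hYlaw
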